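/- Let (aᵢ, bᵢ) and (aᵢ′, bᵢ′), i = 1, …, m, be two families of vectors in ℝⁿ with aᵢ ≤ bᵢ and aᵢ′ ≤ bᵢ′ componentwise, and let F and F′ be the corresponding maxima of upper endpoint functions. Then for every v ∈ ℝⁿ, |F(v) − F′(v)| ≤ (max_{1≤i≤m} (‖aᵢ − aᵢ′‖ + ‖bᵢ − bᵢ′‖)) · ‖v‖. -/

import Mathlib

open RealInnerProductSpace

/-- Componentwise absolute value `|v| = (|v₁|, …, |vₙ|)` of a vector in `ℝⁿ`. -/
noncomputable def vabs {n : ℕ} (v : EuclideanSpace ℝ (Fin n)) : EuclideanSpace ℝ (Fin n) :=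
  WithLp.toLp 2 fun j => |v j|

/-- Maximum of finitely many reals indexed by a nonempty `Fin m`. -/
noncomputable def fsup {m : ℕ} (hm : 0 < m) (f : Fin m → ℝ) : ℝ :=
  Finset.univ.sup' (Finset.univ_nonempty_iff.mpr (Fin.pos_iff_nonempty.mp hm)) f

/-- Upper endpoint function `ḡᵢ(v) = ½⟨aᵢ + bᵢ, v⟩ + ½⟨bᵢ − aᵢ, |v|⟩`. -/
noncomputable def gbar {n m : ℕ} (a b : Fin m → EuclideanSpace ℝ (Fin n)) (i : Fin m)
    (v : EuclideanSpace ℝ (Fin n)) : ℝ :=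
  (1 / 2) * ⟪a i + b i, v⟫ + (1 / 2) * ⟪b i - a i, vabs v⟫

/-- `F(v) = max_{1 ≤ i ≤ m} ḡᵢ(v)`. -/
noncomputable def Fmax {n m : ℕ} (hm : 0 < m) (a b : Fin m → EuclideanSpace ℝ (Fin n))
    (v : EuclideanSpace ℝ (Fin n)) : ℝ :=
  fsup hm fun i => gbar a b i v

/-! Since `ḡᵢ` is linear in the data `(aᵢ, bᵢ)`, `ḡᵢ − ḡᵢ′` is the `ḡᵢ` of the differences,
which Cauchy–Schwarz bounds using `‖|v|‖ = ‖v‖`; and a finite maximum moves by at most the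
maximal change of its entries. -/

theorem Finset.sup'_sub_sup'_le_sup'_abs_sub {ι α : Type*} [AddCommGroup α] [LinearOrder α]
    [IsOrderedAddMonoid α] {s : Finset ι} (hs : s.Nonempty) (f g : ι → α) :
    s.sup' hs f - s.sup' hs g ≤ s.sup' hs fun i => |f i - g i| := by
  rw [sub_le_iff_le_add]
  refine Finset.sup'_le hs f fun i hi => ?_
  calc f i ≤ |f i - g i| + g i := sub_le_iff_le_add.1 (le_abs_self _)
    _ ≤ _ := add_le_add (Finset.le_sup' (fun i => |f i - g i|) hi) (Finset.le_sup' g hi)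

theorem Finset.abs_sup'_sub_sup'_le {ι α : Type*} [AddCommGroup α] [LinearOrder α]
    [IsOrderedAddMonoid α] {s : Finset ι} (hs : s.Nonempty) (f g : ι → α) :
    |s.sup' hs f - s.sup' hs g| ≤ s.sup' hs fun i => |f i - g i| :=
  abs_sub_le_iff.2 ⟨Finset.sup'_sub_sup'_le_sup'_abs_sub hs f g, by
    simpa only [abs_sub_comm] using Finset.sup'_sub_sup'_le_sup'_abs_sub hs g f⟩

theorem norm_vabs {n : ℕ} (v : EuclideanSpace ℝ (Fin n)) : ‖vabs v‖ = ‖v‖ := by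
  simp [EuclideanSpace.norm_eq, vabs, sq_abs]

theorem gbar_sub_gbar {n m : ℕ} (a b a' b' : Fin m → EuclideanSpace ℝ (Fin n)) (i : Fin m)
    (v : EuclideanSpace ℝ (Fin n)) :
    gbar a b i v - gbar a' b' i v = gbar (a - a') (b - b') i v := by
  simp only [gbar, Pi.sub_apply, inner_sub_left, inner_add_left]
  ring

theorem abs_gbar_le {n m : ℕ} (a b : Fin m → EuclideanSpace ℝ (Fin n)) (i : Fin m)
    (v : EuclideanSpace ℝ (Fin n)) :
    |gbar a b i v| ≤ (‖a i‖ + ‖b i‖) * ‖v‖ := by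
  calc |gbar a b i v| ≤ 1 / 2 * (‖a i + b i‖ * ‖v‖) + 1 / 2 * (‖b i - a i‖ * ‖vabs v‖) := by
        refine (abs_add_le _ _).trans ?_
        simp only [abs_mul, abs_of_pos (one_half_pos : (0 : ℝ) < 1 / 2)]
        gcongr <;> exact abs_real_inner_le_norm _ _
    _ ≤ 1 / 2 * ((‖a i‖ + ‖b i‖) * ‖v‖) + 1 / 2 * ((‖a i‖ + ‖b i‖) * ‖v‖) := by
        rw [norm_vabs]
        gcongr
        exacts [norm_add_le (a i) (b i), (norm_sub_le (b i) (a i)).trans_eq (add_comm _ _)]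
    _ = (‖a i‖ + ‖b i‖) * ‖v‖ := by ring

theorem abs_Fmax_sub_Fmax_le_general {n m : ℕ} (hm : 0 < m)
    (a b a' b' : Fin m → EuclideanSpace ℝ (Fin n))
    (v : EuclideanSpace ℝ (Fin n)) :
    |Fmax hm a b v - Fmax hm a' b' v| ≤
      (fsup hm fun i => ‖a i - a' i‖ + ‖b i - b' i‖) * ‖v‖ := by
  unfold Fmax fsup
  calc _ ≤ _ := Finset.abs_sup'_sub_sup'_le _ _ _
    _ ≤ Finset.univ.sup' _ fun i => (‖a i - a' i‖ + ‖b i - b' i‖) * ‖v‖ :=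
        Finset.sup'_mono_fun fun i _ => by
          simpa only [gbar_sub_gbar, Pi.sub_apply] using abs_gbar_le (a - a') (b - b') i v
    _ ≤ _ := Finset.sup'_le _ _ fun i hi =>
        mul_le_mul_of_nonneg_right (Finset.le_sup' (fun i => ‖a i - a' i‖ + ‖b i - b' i‖) hi)
          (norm_nonneg v)

/-- Stability estimate for `F` with respect to the endpoint data:
`|F(v) − F′(v)| ≤ (max_i (‖aᵢ − aᵢ′‖ + ‖bᵢ − bᵢ′‖)) ‖v‖`. -/
theorem abs_Fmax_sub_Fmax_le {n m : ℕ} (hm : 0 < m)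
    (a b a' b' : Fin m → EuclideanSpace ℝ (Fin n))
    (hab : ∀ i j, a i j ≤ b i j) (hab' : ∀ i j, a' i j ≤ b' i j)
    (v : EuclideanSpace ℝ (Fin n)) :
    |Fmax hm a b v - Fmax hm a' b' v| ≤
      (fsup hm fun i => ‖a i - a' i‖ + ‖b i - b' i‖) * ‖v‖ :=
  abs_Fmax_sub_Fmax_le_general hm a b a' b' v
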